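/- arXiv:2006.01268 — 5 statements merged into one kernel-verified Lean document; each statement's English description precedes it below -/
import Mathlib

section
/- For every field K of characteristic different from 2 there exists a q-Fano plane over the rational function field F = K(X,Y,Z): that is, there exist a 7-dimensional F-vector space V and a set 𝔅 of 3-dimensional F-subspaces of V such that every 2-dimensional F-subspace of V is contained in exactly one member of 𝔅. -/
open Cardinal Module Submodule Polynomial

universe u

noncomputable section QF

variable (F : Type u) [Field F]

/-- moment curve in `F^7` -/
def qfCurve (t : F) : Fin 7 → F := fun k => t ^ (k : ℕ)

lemma qf_sum_single (x : Fin 7 → F) :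
    ∑ i, x i • (Pi.single i (1 : F) : Fin 7 → F) = x := by
  have h : ∀ i : Fin 7, x i • (Pi.single i (1 : F) : Fin 7 → F) = Pi.single i (x i) := by
    intro i
    rw [← Pi.single_smul, smul_eq_mul, mul_one]
  simp_rw [h]
  exact Finset.univ_sum_single x

lemma qf_card_curve_mem_le (W : Submodule F (Fin 7 → F)) (hW : W ≠ ⊤) :
    #{t : F | qfCurve F t ∈ W} ≤ 6 := by
  classical
  -- find a nonzero functional vanishing on W
  obtain ⟨v, -, hv⟩ := SetLike.exists_of_lt (show W < ⊤ from lt_top_iff_ne_top.2 hW)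
  have hqv : W.mkQ v ≠ 0 := by
    simpa [Submodule.Quotient.mk_eq_zero] using hv
  obtain ⟨ψ, hψ⟩ : ∃ ψ : Module.Dual F ((Fin 7 → F) ⧸ W), ψ (W.mkQ v) ≠ 0 := by
    by_contra h
    push_neg at h
    exact hqv ((Module.forall_dual_apply_eq_zero_iff F _).1 h)
  set φ : (Fin 7 → F) →ₗ[F] F := ψ.comp W.mkQ with hφdef
  have hφW : ∀ x ∈ W, φ x = 0 := by
    intro x hx
    simp [hφdef, (Submodule.Quotient.mk_eq_zero W).2 hx]
  have hφv : φ v ≠ 0 := hψ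
  set a : Fin 7 → F := fun k => φ (Pi.single k (1 : F)) with ha
  set p : F[X] := ∑ k : Fin 7, C (a k) * X ^ (k : ℕ) with hp
  have hφx : ∀ x : Fin 7 → F, φ x = ∑ k, x k * a k := by
    intro x
    conv_lhs => rw [← qf_sum_single F x]
    rw [map_sum]
    refine Finset.sum_congr rfl fun k _ => ?_
    rw [map_smul, smul_eq_mul, ha]
  have heval : ∀ t : F, p.eval t = φ (qfCurve F t) := by
    intro t
    rw [hφx, hp, Polynomial.eval_finset_sum]
    refine Finset.sum_congr rfl fun k _ => ?_
    simp only [Polynomial.eval_mul, Polynomial.eval_C, Polynomial.eval_pow,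
      Polynomial.eval_X, qfCurve]
    ring
  have hpne : p ≠ 0 := by
    intro h0
    apply hφv
    rw [hφx]
    have hak : ∀ k : Fin 7, a k = 0 := by
      intro k
      have : p.coeff (k : ℕ) = 0 := by rw [h0]; simp
      rw [hp] at this
      rw [Polynomial.finset_sum_coeff] at this
      simpa [Polynomial.coeff_C_mul, Polynomial.coeff_X_pow, Fin.val_inj,
        Finset.sum_ite_eq'] using this
    simp [hak]
  have hdeg : p.natDegree ≤ 6 := by
    refine (Polynomial.natDegree_sum_le _ _).trans ?_
    refine (Finset.fold_max_le _).2 ⟨by norm_num, fun k _ => ?_⟩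
    exact (Polynomial.natDegree_C_mul_X_pow_le _ _).trans (Nat.lt_succ_iff.mp k.isLt)
  have hsub : {t : F | qfCurve F t ∈ W} ⊆ ↑p.roots.toFinset := by
    intro t ht
    simp only [Multiset.mem_toFinset, Finset.coe_sort_coe, Finset.mem_coe]
    rw [Polynomial.mem_roots hpne]
    show p.eval t = 0
    rw [heval]
    exact hφW _ ht
  calc #{t : F | qfCurve F t ∈ W} ≤ #(↑p.roots.toFinset : Set F) :=
        Cardinal.mk_le_mk_of_subset hsub
    _ = (p.roots.toFinset.card : Cardinal) := Cardinal.mk_coe_finset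
    _ ≤ 6 := by
        have h1 : p.roots.toFinset.card ≤ 6 :=
          (p.roots.toFinset_card_le).trans ((Polynomial.card_roots' p).trans hdeg)
        exact_mod_cast Nat.cast_le.2 h1


lemma qf_exists_avoid [Infinite F] {I : Type u} (hI : #I < #F)
    (W : I → Submodule F (Fin 7 → F)) :
    ∃ t : F, ∀ j, W j ≠ ⊤ → qfCurve F t ∉ W j := by
  set T : I → Set F := fun j => {t : F | W j ≠ ⊤ ∧ qfCurve F t ∈ W j} with hT
  have hTle : ∀ j, #(T j) ≤ 6 := by
    intro j
    by_cases hj : W j = ⊤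
    · have : T j = ∅ := by ext t; simp [hT, hj]
      rw [this]; simp
    · refine le_trans (Cardinal.mk_le_mk_of_subset ?_) (qf_card_curve_mem_le F (W j) hj)
      intro t ht; exact ht.2
  have hU : #(⋃ j, T j) < #F := by
    refine lt_of_le_of_lt ((Cardinal.mk_iUnion_le T).trans ?_)
      (Cardinal.mul_lt_of_lt (Cardinal.aleph0_le_mk F) hI
        ((Cardinal.nat_lt_aleph0 6).trans_le (Cardinal.aleph0_le_mk F)))
    exact mul_le_mul_right (ciSup_le' hTle) _
  have : (⋃ j, T j) ≠ Set.univ := by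
    intro h
    rw [h, Cardinal.mk_univ] at hU
    exact lt_irrefl _ hU
  obtain ⟨t, ht⟩ := Set.ne_univ_iff_exists_notMem _ |>.1 this
  refine ⟨t, fun j hj hmem => ht ?_⟩
  exact Set.mem_iUnion.2 ⟨j, hj, hmem⟩

variable {F}

lemma qf_finrank_sup_span {W : Submodule F (Fin 7 → F)} {v : Fin 7 → F} (hv : v ∉ W) :
    finrank F ↥(W ⊔ span F {v}) = finrank F ↥W + 1 := by
  have h0 : v ≠ 0 := fun h => hv (h ▸ W.zero_mem)
  have hinf : W ⊓ span F {v} = ⊥ := by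
    rw [eq_bot_iff]
    rintro x ⟨hxW, hxv⟩
    obtain ⟨a, rfl⟩ := Submodule.mem_span_singleton.1 hxv
    rcases eq_or_ne a 0 with rfl | ha
    · simp
    · exact absurd (by simpa [smul_smul, inv_mul_cancel₀ ha] using W.smul_mem a⁻¹ hxW) hv
  have h := Submodule.finrank_sup_add_finrank_inf_eq W (span F {v})
  rw [hinf, finrank_bot, finrank_span_singleton h0] at h
  omega

lemma qf_inf_le_one {U b' : Submodule F (Fin 7 → F)} {v : Fin 7 → F}
    (hU : finrank F ↥U = 2) (hb' : finrank F ↥b' = 3) (hUb' : ¬ U ≤ b')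
    (hv : v ∉ U ⊔ b') :
    finrank F ↥((U ⊔ span F {v}) ⊓ b') ≤ 1 := by
  have hvU : v ∉ U := fun h => hv (Submodule.mem_sup_left h)
  have hinf1 : finrank F ↥(U ⊓ b') ≤ 1 := by
    have hle : finrank F ↥(U ⊓ b') ≤ 2 := hU ▸ Submodule.finrank_mono inf_le_left
    by_contra h
    push_neg at h
    have : U ⊓ b' = U := Submodule.eq_of_le_of_finrank_le inf_le_left (by omega)
    exact hUb' (this ▸ inf_le_right)
  have h1 := Submodule.finrank_sup_add_finrank_inf_eq U b'
  have h2 : finrank F ↥((U ⊔ b') ⊔ span F {v}) = finrank F ↥(U ⊔ b') + 1 :=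
    qf_finrank_sup_span hv
  have h3 : finrank F ↥(U ⊔ span F {v}) = 3 := by
    rw [qf_finrank_sup_span hvU, hU]
  have h4 := Submodule.finrank_sup_add_finrank_inf_eq (U ⊔ span F {v}) b'
  have h5 : (U ⊔ span F {v}) ⊔ b' = (U ⊔ b') ⊔ span F {v} := sup_right_comm _ _ _
  rw [h5] at h4
  omega


variable (F) in
lemma qf_card_twodim_le [Infinite F] :
    #{U : Submodule F (Fin 7 → F) // finrank F ↥U = 2} ≤ #F := by
  classical
  have hmap : ∀ U : {U : Submodule F (Fin 7 → F) // finrank F ↥U = 2},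
      ∃ q : (Fin 7 → F) × (Fin 7 → F), (U : Submodule F (Fin 7 → F)) = span F {q.1, q.2} := by
    rintro ⟨U, hU⟩
    let b := Module.finBasisOfFinrankEq F ↥U hU
    refine ⟨((b 0 : Fin 7 → F), (b 1 : Fin 7 → F)), le_antisymm ?_ ?_⟩
    · intro x hx
      have hx' : (⟨x, hx⟩ : ↥U) ∈ span F (Set.range ⇑b) := by
        rw [b.span_eq]; trivial
      have : x ∈ Submodule.map U.subtype (span F (Set.range ⇑b)) :=
        ⟨⟨x, hx⟩, hx', rfl⟩
      rw [Submodule.map_span] at this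
      refine Submodule.span_mono ?_ this
      rintro y ⟨z, ⟨i, rfl⟩, rfl⟩
      fin_cases i
      · exact Set.mem_insert _ _
      · exact Set.mem_insert_of_mem _ rfl
    · rw [Submodule.span_le]
      rintro y hy
      rcases hy with h | h
      · exact h ▸ (b 0).2
      · simp only [Set.mem_singleton_iff] at h
        exact h ▸ (b 1).2
  choose q hq using hmap
  have hinj : Function.Injective q := by
    intro U1 U2 h
    exact Subtype.ext (by rw [hq U1, hq U2, h])
  have hV : #(Fin 7 → F) = #F := by
    rw [Cardinal.mk_arrow]
    simp only [Cardinal.mk_fin, Cardinal.lift_natCast, Cardinal.lift_id,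
      Cardinal.lift_uzero]
    exact_mod_cast Cardinal.power_nat_eq (c := #F) (n := 7)
      (Cardinal.aleph0_le_mk F) (by norm_num)
  calc #{U : Submodule F (Fin 7 → F) // finrank F ↥U = 2}
      ≤ #((Fin 7 → F) × (Fin 7 → F)) := Cardinal.mk_le_of_injective hinj
    _ = #F := by
        rw [Cardinal.mk_prod, Cardinal.lift_id, hV,
          Cardinal.mul_eq_self (Cardinal.aleph0_le_mk F)]


section Construction

variable (F) [Infinite F]

abbrev qfIdx : Type u := (Cardinal.ord #F).ToType

set_option linter.unusedSectionVars false in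
lemma qf_small (i : qfIdx F) : #(Option ↥(Set.Iio i)) < #F := by
  rw [Cardinal.mk_option]
  exact Cardinal.add_lt_of_lt (Cardinal.aleph0_le_mk F) (Cardinal.mk_Iio_ord_toType i)
    (Cardinal.one_lt_aleph0.trans_le (Cardinal.aleph0_le_mk F))

noncomputable def qfW (i : qfIdx F) (rec : ∀ j, j < i → Submodule F (Fin 7 → F))
    (U : Submodule F (Fin 7 → F)) : Option ↥(Set.Iio i) → Submodule F (Fin 7 → F) :=
  fun o => o.elim U fun j => U ⊔ rec j.1 j.2

noncomputable def qfT (i : qfIdx F) (rec : ∀ j, j < i → Submodule F (Fin 7 → F))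
    (U : Submodule F (Fin 7 → F)) : F :=
  Classical.choose (qf_exists_avoid F (qf_small F i) (qfW F i rec U))

lemma qfT_spec (i : qfIdx F) (rec : ∀ j, j < i → Submodule F (Fin 7 → F))
    (U : Submodule F (Fin 7 → F)) :
    ∀ o, qfW F i rec U o ≠ ⊤ → qfCurve F (qfT F i rec U) ∉ qfW F i rec U o :=
  Classical.choose_spec (qf_exists_avoid F (qf_small F i) (qfW F i rec U))

variable (g : {U : Submodule F (Fin 7 → F) // finrank F ↥U = 2} ↪ qfIdx F)

open Classical in
noncomputable def qfBody (i : qfIdx F) (rec : ∀ j, j < i → Submodule F (Fin 7 → F)) :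
    Submodule F (Fin 7 → F) :=
  if hi : ∃ U, g U = i then
    if ∃ j : ↥(Set.Iio i), ((Classical.choose hi).1 : Submodule F (Fin 7 → F)) ≤ rec j.1 j.2
    then ⊥
    else (Classical.choose hi).1 ⊔ span F {qfCurve F (qfT F i rec (Classical.choose hi).1)}
  else ⊥

noncomputable def qfFun : qfIdx F → Submodule F (Fin 7 → F) :=
  WellFounded.fix wellFounded_lt (qfBody F g)

lemma qfFun_eq (i : qfIdx F) : qfFun F g i = qfBody F g i (fun j _ => qfFun F g j) :=
  WellFounded.fix_eq _ _ _

lemma qfFun_spec (i : qfIdx F) :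
    ((¬ ∃ U, g U = i) ∧ qfFun F g i = ⊥) ∨
    ∃ hi : ∃ U, g U = i,
      ((∃ j : ↥(Set.Iio i), (Classical.choose hi).1 ≤ qfFun F g j.1) ∧ qfFun F g i = ⊥) ∨
      ((¬ ∃ j : ↥(Set.Iio i), (Classical.choose hi).1 ≤ qfFun F g j.1) ∧
        ∃ v : Fin 7 → F, v ∉ (Classical.choose hi).1 ∧
          (∀ j : ↥(Set.Iio i), (Classical.choose hi).1 ⊔ qfFun F g j.1 ≠ ⊤ →
            v ∉ (Classical.choose hi).1 ⊔ qfFun F g j.1) ∧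
          qfFun F g i = (Classical.choose hi).1 ⊔ span F {v}) := by
  rw [qfFun_eq]
  unfold qfBody
  split_ifs with hi hcov
  · exact Or.inr ⟨hi, Or.inl ⟨hcov, rfl⟩⟩
  · refine Or.inr ⟨hi, Or.inr ⟨hcov, _, ?_, ?_, rfl⟩⟩
    · have h := qfT_spec F i (fun j _ => qfFun F g j) (Classical.choose hi).1 none
      simp only [qfW, Option.elim_none] at h
      apply h
      intro htop
      have h2 := (Classical.choose hi).2
      rw [htop, finrank_top, Module.finrank_fin_fun] at h2
      omega
    · intro j hj
      have h := qfT_spec F i (fun j _ => qfFun F g j) (Classical.choose hi).1 (some j)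
      simp only [qfW, Option.elim_some] at h
      exact h hj
  · exact Or.inl ⟨hi, rfl⟩

end Construction


theorem qf_main (F : Type u) [Field F] [Infinite F] :
    ∃ B : Set (Submodule F (Fin 7 → F)),
      (∀ b ∈ B, finrank F ↥b = 3) ∧
      ∀ U : Submodule F (Fin 7 → F), finrank F ↥U = 2 → ∃! b, b ∈ B ∧ U ≤ b := by
  classical
  obtain ⟨g⟩ := (Cardinal.le_def _ _).1
    (le_of_le_of_eq (qf_card_twodim_le F) (Cardinal.mk_ord_toType #F).symm)
  have fact1 : ∀ i, qfFun F g i ≠ ⊥ → finrank F ↥(qfFun F g i) = 3 := by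
    intro i hne
    rcases qfFun_spec F g i with ⟨-, h⟩ | ⟨hi, ⟨-, h⟩ | ⟨-, v, hvU, -, heq⟩⟩
    · exact absurd h hne
    · exact absurd h hne
    · rw [heq, qf_finrank_sup_span hvU, (Classical.choose hi).2]
  have fact1' : ∀ i (U : Submodule F (Fin 7 → F)),
      U ≤ qfFun F g i → finrank F ↥U = 2 → qfFun F g i ≠ ⊥ := by
    intro i U hle hU h
    rw [h, le_bot_iff] at hle
    rw [hle, finrank_bot] at hU
    omega
  have fact2 : ∀ U : Submodule F (Fin 7 → F), ∀ hU : finrank F ↥U = 2,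
      ∃ i, U ≤ qfFun F g i := by
    intro U hU
    rcases qfFun_spec F g (g ⟨U, hU⟩) with ⟨hno, -⟩ | ⟨hi, hrest⟩
    · exact absurd ⟨⟨U, hU⟩, rfl⟩ hno
    · have hUeq : (Classical.choose hi).1 = U :=
        congrArg Subtype.val (g.injective (Classical.choose_spec hi))
      rcases hrest with ⟨⟨j, hj⟩, -⟩ | ⟨-, v, -, -, heq⟩
      · exact ⟨j.1, le_trans (le_of_eq hUeq.symm) hj⟩
      · exact ⟨g ⟨U, hU⟩, by rw [heq, hUeq]; exact le_sup_left⟩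
  have fact3 : ∀ i j : qfIdx F, j < i → qfFun F g j ≠ ⊥ → qfFun F g i ≠ ⊥ →
      finrank F ↥(qfFun F g i ⊓ qfFun F g j) ≤ 1 := by
    intro i j hji hj hi'
    rcases qfFun_spec F g i with ⟨-, h⟩ | ⟨hi, ⟨-, h⟩ | ⟨hncov, v, hvU, havoid, heq⟩⟩
    · exact absurd h hi'
    · exact absurd h hi'
    · have hU2 : finrank F ↥(Classical.choose hi).1 = 2 := (Classical.choose hi).2
      have hUb : ¬ (Classical.choose hi).1 ≤ qfFun F g j :=
        fun hle => hncov ⟨⟨j, hji⟩, hle⟩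
      have hb3 : finrank F ↥(qfFun F g j) = 3 := fact1 j hj
      have hvs : v ∉ (Classical.choose hi).1 ⊔ qfFun F g j := by
        apply havoid ⟨j, hji⟩
        intro htop
        have hd := Submodule.finrank_sup_add_finrank_inf_eq
          (Classical.choose hi).1 (qfFun F g j)
        rw [htop, finrank_top, Module.finrank_fin_fun, hU2, hb3] at hd
        omega
      rw [heq]
      exact qf_inf_le_one hU2 hb3 hUb hvs
  refine ⟨{b | (∃ i, qfFun F g i = b) ∧ b ≠ ⊥}, ?_, ?_⟩
  · rintro b ⟨⟨i, rfl⟩, hne⟩; exact fact1 i hne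
  · intro U hU
    obtain ⟨i, hle⟩ := fact2 U hU
    have hne := fact1' i U hle hU
    refine ⟨qfFun F g i, ⟨⟨⟨i, rfl⟩, hne⟩, hle⟩, ?_⟩
    rintro b ⟨⟨⟨i', rfl⟩, hne'⟩, hle'⟩
    by_contra hbe
    have hii : i' ≠ i := fun h => hbe (by rw [h])
    have hcontra : ∀ a b' : qfIdx F, b' < a → U ≤ qfFun F g a → U ≤ qfFun F g b' →
        qfFun F g a ≠ ⊥ → qfFun F g b' ≠ ⊥ → False := by
      intro a b' hlt ha hb' hane hbne
      have h1 := fact3 a b' hlt hbne hane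
      have h2 : finrank F ↥U ≤ finrank F ↥(qfFun F g a ⊓ qfFun F g b') :=
        Submodule.finrank_mono (le_inf ha hb')
      rw [hU] at h2
      omega
    rcases lt_or_gt_of_ne hii with h | h
    · exact hcontra i i' h hle hle' hne hne'
    · exact hcontra i' i h hle' hle hne' hne

end QF

/-- Over the rational function field `F = K(X,Y,Z)` in three variables over any field `K` of
characteristic `≠ 2` there exists a q-Fano plane (a `2-(7,3,1)` subspace design): a set `𝔅`
of 3-dimensional subspaces of a 7-dimensional `F`-vector space such that every 2-dimensional
subspace is contained in exactly one member of `𝔅`. -/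
theorem exists_qFano_functionField (K : Type*) [Field K] (h2 : (2 : K) ≠ 0) :
    ∃ B : Set (Submodule (FractionRing (MvPolynomial (Fin 3) K))
        (Fin 7 → FractionRing (MvPolynomial (Fin 3) K))),
      Module.finrank (FractionRing (MvPolynomial (Fin 3) K))
          (Fin 7 → FractionRing (MvPolynomial (Fin 3) K)) = 7 ∧
      (∀ b ∈ B, Module.finrank (FractionRing (MvPolynomial (Fin 3) K)) ↥b = 3) ∧
      (∀ U : Submodule (FractionRing (MvPolynomial (Fin 3) K))
          (Fin 7 → FractionRing (MvPolynomial (Fin 3) K)),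
        Module.finrank (FractionRing (MvPolynomial (Fin 3) K)) ↥U = 2 →
        ∃! b, b ∈ B ∧ U ≤ b) := by
  have hinf : Infinite (FractionRing (MvPolynomial (Fin 3) K)) :=
    Infinite.of_injective _
      (IsFractionRing.injective (MvPolynomial (Fin 3) K)
        (FractionRing (MvPolynomial (Fin 3) K)))
  obtain ⟨B, h3, hU⟩ := qf_main (FractionRing (MvPolynomial (Fin 3) K))
  exact ⟨B, Module.finrank_fin_fun _, h3, hU⟩
end

section
/- For every subfield F of the field ℝ of real numbers (in particular for F = ℝ and F = ℚ) there exists a q-Fano plane over F: there exist a 7-dimensional F-vector space V and a set 𝔅 of 3-dimensional F-subspaces of V such that every 2-dimensional F-subspace of V is contained in exactly one member of 𝔅. -/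
/-!
Over an ordered field `K`, the octonionic cross product `×` on `K⁷` is bilinear, alternating,
orthogonal to its factors and satisfies `x × (x × y) = ⟨x, y⟩ x - ⟨x, x⟩ y`. Take as blocks the
3-dimensional subspaces closed under `×`. If `u, v` span a 2-dimensional `U`, then `u × v` is a
nonzero vector orthogonal to `U`, hence outside `U` since `⟨·, ·⟩` is anisotropic, and the identity
shows that `span {u × v, u, v}` is closed under `×`. Any block containing `U` contains `u × v`, so
this span is the unique block through `U`.
-/

open Module Submodule

structure IsCrossProduct {R V : Type*} [CommRing R] [AddCommGroup V] [Module R V]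
    (B : LinearMap.BilinForm R V) (cross : V →ₗ[R] V →ₗ[R] V) : Prop where
  cross_self : ∀ x, cross x x = 0
  apply_cross_left : ∀ x y, B x (cross x y) = 0
  cross_cross_self : ∀ x y, cross x (cross x y) = B x y • x - B x x • y

namespace IsCrossProduct

section CommRing

variable {R V : Type*} [CommRing R] [AddCommGroup V] [Module R V]
  {B : LinearMap.BilinForm R V} {cross : V →ₗ[R] V →ₗ[R] V}

theorem cross_swap (h : IsCrossProduct B cross) (x y : V) : cross y x = -cross x y := by
  have hxy := h.cross_self (x + y)
  simp only [map_add, LinearMap.add_apply, h.cross_self, zero_add, add_zero] at hxy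
  exact eq_neg_of_add_eq_zero_left hxy

theorem apply_cross_right (h : IsCrossProduct B cross) (x y : V) : B y (cross x y) = 0 := by
  rw [h.cross_swap, map_neg, h.apply_cross_left, neg_zero]

end CommRing

variable {K V : Type*} [Field K] [AddCommGroup V] [Module K V]
  {B : LinearMap.BilinForm K V} {cross : V →ₗ[K] V →ₗ[K] V}

theorem cross_ne_zero (h : IsCrossProduct B cross) (hB : ∀ x, B x x = 0 → x = 0) {u v : V}
    (huv : LinearIndependent K ![u, v]) : cross u v ≠ 0 := by
  intro huv0
  have hcomb : B u v • u + (-B u u) • v = 0 := by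
    rw [neg_smul, ← sub_eq_add_neg, ← h.cross_cross_self, huv0, map_zero]
  have hu : u = 0 := hB u (neg_eq_zero.mp (LinearIndependent.pair_iff.mp huv _ _ hcomb).2)
  exact huv.ne_zero 0 hu

theorem cross_notMem_span_pair (h : IsCrossProduct B cross) (hB : ∀ x, B x x = 0 → x = 0)
    {u v : V} (huv : LinearIndependent K ![u, v]) : cross u v ∉ span K {u, v} := by
  intro hw
  have horth : span K {u, v} ≤ LinearMap.ker (B.flip (cross u v)) := by
    rw [span_le, Set.insert_subset_iff, Set.singleton_subset_iff]
    exact ⟨h.apply_cross_left u v, h.apply_cross_right u v⟩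
  exact h.cross_ne_zero hB huv (hB _ (horth hw))

theorem finrank_span_cross_pair (h : IsCrossProduct B cross) (hB : ∀ x, B x x = 0 → x = 0)
    {u v : V} (huv : LinearIndependent K ![u, v]) :
    finrank K (span K {cross u v, u, v}) = 3 := by
  have hpair : finrank K (span K {u, v}) = 2 := by
    rw [← Matrix.range_cons_cons_empty u v ![], finrank_span_eq_card huv, Fintype.card_fin]
  have : FiniteDimensional K (span K {u, v}) := Module.finite_of_finrank_pos (by omega)
  have hdisj : Disjoint (K ∙ cross u v) (span K {u, v}) :=
    ((disjoint_span_singleton' (h.cross_ne_zero hB huv)).mpr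
      (h.cross_notMem_span_pair hB huv)).symm
  have hsum := finrank_sup_add_finrank_inf_eq (K ∙ cross u v) (span K {u, v})
  rw [hdisj.eq_bot, finrank_bot, finrank_span_singleton (h.cross_ne_zero hB huv), hpair] at hsum
  rw [span_insert]
  omega

theorem cross_mem_span_cross_pair (h : IsCrossProduct B cross) (u v : V) {x y : V}
    (hx : x ∈ span K {cross u v, u, v}) (hy : y ∈ span K {cross u v, u, v}) :
    cross x y ∈ span K {cross u v, u, v} := by
  set P := span K {cross u v, u, v}
  have hu : u ∈ P := subset_span (by simp)
  have hv : v ∈ P := subset_span (by simp)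
  have huv : cross u v ∈ P := subset_span (by simp)
  have hu_uv : cross u (cross u v) ∈ P := by
    rw [h.cross_cross_self]
    exact sub_mem (smul_mem _ _ hu) (smul_mem _ _ hv)
  have hv_uv : cross v (cross u v) ∈ P := by
    rw [h.cross_swap v u, map_neg, h.cross_cross_self]
    exact neg_mem (sub_mem (smul_mem _ _ hv) (smul_mem _ _ hu))
  suffices map₂ cross P P ≤ P from map₂_le.mp this x hx y hy
  rw [map₂_span_span, span_le]
  simp only [Set.image2_subset_iff, Set.forall_mem_insert, Set.mem_singleton_iff, forall_eq, SetLike.mem_coe]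
  refine ⟨⟨?_, ?_, ?_⟩, ⟨?_, ?_, ?_⟩, ⟨?_, ?_, ?_⟩⟩ <;>
    first
    | (rw [h.cross_self]; exact zero_mem P)
    | assumption
    | (rw [h.cross_swap]; exact neg_mem ‹_›)

end IsCrossProduct

section Design

variable {K V : Type*} [Field K] [AddCommGroup V] [Module K V]

/-- Over `ℝ` with the octonionic cross product, these are the imaginary parts of the quaternion
subalgebras of the octonions. -/
def crossClosedPlanes (cross : V →ₗ[K] V →ₗ[K] V) : Set (Submodule K V) :=
  {P | finrank K P = 3 ∧ ∀ x ∈ P, ∀ y ∈ P, cross x y ∈ P}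

theorem exists_linearIndependent_pair_span_eq {U : Submodule K V} (hU : finrank K U = 2) :
    ∃ u v : V, LinearIndependent K ![u, v] ∧ span K {u, v} = U := by
  have : Module.Finite K U := Module.finite_of_finrank_pos (by omega)
  let b := finBasisOfFinrankEq K U hU
  have hb : ![(b 0 : V), b 1] = U.subtype ∘ b := by ext i; fin_cases i <;> rfl
  refine ⟨b 0, b 1, hb ▸ b.linearIndependent.map' U.subtype (ker_subtype U), ?_⟩
  rw [← Matrix.range_cons_cons_empty _ _ ![], hb, Set.range_comp, ← map_span, b.span_eq,
    map_subtype_top]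

theorem existsUnique_mem_crossClosedPlanes_of_finrank_eq_two {B : LinearMap.BilinForm K V}
    {cross : V →ₗ[K] V →ₗ[K] V} (h : IsCrossProduct B cross) (hB : ∀ x, B x x = 0 → x = 0)
    {U : Submodule K V} (hU : finrank K U = 2) :
    ∃! P, P ∈ crossClosedPlanes cross ∧ U ≤ P := by
  obtain ⟨u, v, huv, rfl⟩ := exists_linearIndependent_pair_span_eq hU
  have hU_le : span K {u, v} ≤ span K {cross u v, u, v} := span_mono (Set.subset_insert _ _)
  refine ⟨_, ⟨⟨h.finrank_span_cross_pair hB huv,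
    fun x hx y hy => h.cross_mem_span_cross_pair u v hx hy⟩, hU_le⟩, ?_⟩
  rintro P ⟨⟨hP3, hPcross⟩, hUP⟩
  have hu : u ∈ P := hUP (subset_span (by simp))
  have hv : v ∈ P := hUP (subset_span (by simp))
  have hle : span K {cross u v, u, v} ≤ P := by
    rw [span_le, Set.insert_subset_iff, Set.insert_subset_iff, Set.singleton_subset_iff]
    exact ⟨hPcross u hu v hv, hu, hv⟩
  have : Module.Finite K P := Module.finite_of_finrank_pos (by omega)
  exact (eq_of_le_of_finrank_le hle (by rw [hP3, h.finrank_span_cross_pair hB huv])).symm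

end Design

section Octonion

variable {R : Type*} [CommRing R]

/-- The cross product of the imaginary octonions `e₀, …, e₆` whose multiplication table is given
by the lines `{i, i + 1, i + 3}` (indices mod 7) of the Fano plane: `eᵢ × eᵢ₊₁ = eᵢ₊₃`. -/
def octonionCross : (Fin 7 → R) →ₗ[R] (Fin 7 → R) →ₗ[R] (Fin 7 → R) :=
  LinearMap.mk₂ R
    (fun x y k => x (k + 1) * y (k + 3) - x (k + 3) * y (k + 1)
      + x (k + 2) * y (k + 6) - x (k + 6) * y (k + 2)
      + x (k + 4) * y (k + 5) - x (k + 5) * y (k + 4))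
    (by intros; ext; simp only [Pi.add_apply]; ring)
    (by intros; ext; simp only [Pi.smul_apply, smul_eq_mul]; ring)
    (by intros; ext; simp only [Pi.add_apply]; ring)
    (by intros; ext; simp only [Pi.smul_apply, smul_eq_mul]; ring)

theorem isCrossProduct_octonionCross :
    IsCrossProduct (dotProductBilin R R) (octonionCross (R := R)) where
  cross_self x := by
    ext k; simp only [octonionCross, LinearMap.mk₂_apply, Pi.zero_apply]; ring
  apply_cross_left x y := by
    simp only [octonionCross, LinearMap.mk₂_apply, dotProductBilin_apply_apply, dotProduct,
      Fin.sum_univ_seven, Fin.isValue, Fin.reduceAdd]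
    ring
  cross_cross_self x y := by
    ext k
    fin_cases k <;>
      simp only [octonionCross, LinearMap.mk₂_apply, dotProductBilin_apply_apply, dotProduct,
        Fin.sum_univ_seven, Fin.zero_eta, Fin.mk_one, Fin.reduceFinMk, Fin.isValue, Fin.reduceAdd,
        Pi.sub_apply, Pi.smul_apply, smul_eq_mul] <;>
      ring

end Octonion

/-- Over every subfield `F` of `ℝ` (in particular over `ℝ` and `ℚ`) there exists a q-Fano
plane (a `2-(7,3,1)` subspace design): a set `𝔅` of 3-dimensional subspaces of a
7-dimensional `F`-vector space such that every 2-dimensional subspace is contained in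
exactly one member of `𝔅`. -/
theorem exists_qFano_subfield_real (F : Subfield ℝ) :
    ∃ B : Set (Submodule F (Fin 7 → F)),
      Module.finrank F (Fin 7 → F) = 7 ∧
      (∀ b ∈ B, Module.finrank F ↥b = 3) ∧
      (∀ U : Submodule F (Fin 7 → F), Module.finrank F ↥U = 2 →
        ∃! b, b ∈ B ∧ U ≤ b) :=
  ⟨crossClosedPlanes octonionCross, by simp, fun _ hP => hP.1, fun _ hU =>
    existsUnique_mem_crossClosedPlanes_of_finrank_eq_two isCrossProduct_octonionCross
      (fun x hx => dotProduct_self_eq_zero.mp hx) hU⟩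
end

section
/- Let F be a field with char F ≠ 2, let α, β, γ ∈ F be nonzero, let 𝒪 = 𝒪_F(α,β,γ), and let u, v ∈ Im(𝒪) be linearly independent over F. Then the subalgebra of 𝒪 generated by {u, v} equals the F-linear span of {1, u, v, u·v}; in particular its dimension is 3 or 4. -/
open Module Submodule

namespace CayleyQFano

variable (F : Type*) [Field F]

/-- The underlying vector space of the Cayley algebra `𝒪_F(α,β,γ) = D_γ(D_β(D_α(F)))`:
three iterated Cayley–Dickson doublings of `F`. -/
abbrev Oct := ((F × F) × (F × F)) × ((F × F) × (F × F))

/-- The unit element of the Cayley algebra. -/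
def octOne : Oct F := (((1, 0), (0, 0)), ((0, 0), (0, 0)))

variable {F}

/-- The involution of `D_α(F)` (the identity involution on `F`, doubled). -/
def conj1 (a : F × F) : F × F := (a.1, -a.2)

/-- The involution of `D_β(D_α(F))`. -/
def conj2 (a : (F × F) × (F × F)) : (F × F) × (F × F) := (conj1 a.1, -a.2)

/-- The involution `x ↦ x*` of the Cayley algebra. -/
def octConj (x : Oct F) : Oct F := (conj2 x.1, -x.2)

/-- The multiplication of `D_α(F)`: `(a,b)·(c,d) = (ac + α·d·b*, a*·d + c·b)`
with the identity involution on `F`. -/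
def mul1 (α : F) (x y : F × F) : F × F :=
  (x.1 * y.1 + α * (y.2 * x.2), x.1 * y.2 + y.1 * x.2)

/-- The multiplication of `D_β(D_α(F))`. -/
def mul2 (α β : F) (x y : (F × F) × (F × F)) : (F × F) × (F × F) :=
  (mul1 α x.1 y.1 + β • mul1 α y.2 (conj1 x.2),
   mul1 α (conj1 x.1) y.2 + mul1 α y.1 x.2)

/-- The multiplication of the Cayley algebra `𝒪_F(α,β,γ) = D_γ(D_β(D_α(F)))`. -/
def octMul (α β γ : F) (x y : Oct F) : Oct F :=
  (mul2 α β x.1 y.1 + γ • mul2 α β y.2 (conj2 x.2),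
   mul2 α β (conj2 x.1) y.2 + mul2 α β y.1 x.2)

/-- The space `Im 𝒪 = {x : x* = -x}` of imaginary elements, as an `F`-subspace. -/
def octIm (F : Type*) [Field F] : Submodule F (Oct F) where
  carrier := {x | octConj x = -x}
  add_mem' := by
    intro a b ha hb
    simp only [Set.mem_setOf_eq] at *
    have h : octConj (a + b) = octConj a + octConj b := by
      simp [octConj, conj2, conj1, Prod.ext_iff, neg_add, add_comm]
    rw [h, ha, hb, neg_add]
  zero_mem' := by
    simp [Set.mem_setOf_eq, octConj, conj2, conj1, Prod.ext_iff]
  smul_mem' := by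
    intro c x hx
    simp only [Set.mem_setOf_eq] at *
    have h : octConj (c • x) = c • octConj x := by
      simp [octConj, conj2, conj1, Prod.ext_iff, smul_neg]
    rw [h, hx, smul_neg]

/-- `H` is a (unital, not necessarily associative) subalgebra of the Cayley algebra:
an `F`-subspace containing `1` and closed under multiplication. -/
def IsSubalg (α β γ : F) (H : Submodule F (Oct F)) : Prop :=
  octOne F ∈ H ∧ ∀ x ∈ H, ∀ y ∈ H, octMul α β γ x y ∈ H

/-- A subset of the Cayley algebra is associative if `(x·y)·z = x·(y·z)` holds
for all its elements. -/
def IsAssocOn (α β γ : F) (s : Set (Oct F)) : Prop :=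
  ∀ x ∈ s, ∀ y ∈ s, ∀ z ∈ s,
    octMul α β γ (octMul α β γ x y) z = octMul α β γ x (octMul α β γ y z)

/-- The subalgebra generated by a set: the smallest subalgebra containing it. -/
def adjoin (α β γ : F) (s : Set (Oct F)) : Submodule F (Oct F) :=
  sInf {H : Submodule F (Oct F) | IsSubalg α β γ H ∧ s ⊆ (H : Set (Oct F))}

/-- The Cayley algebra `𝒪_F(α,β,γ)` has no zero divisors. -/
def HasNoZeroDiv (α β γ : F) : Prop :=
  ∀ x y : Oct F, octMul α β γ x y = 0 → x = 0 ∨ y = 0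


section Helpers
variable {F : Type*} [Field F] (α β γ : F)

lemma octMul_one_left (x : Oct F) : octMul α β γ (octOne F) x = x := by
  obtain ⟨⟨⟨x0,x1⟩,x2,x3⟩,⟨x4,x5⟩,x6,x7⟩ := x
  simp [octMul, mul2, mul1, conj2, conj1, octOne, Prod.ext_iff]

lemma octMul_one_right (x : Oct F) : octMul α β γ x (octOne F) = x := by
  obtain ⟨⟨⟨x0,x1⟩,x2,x3⟩,⟨x4,x5⟩,x6,x7⟩ := x
  simp [octMul, mul2, mul1, conj2, conj1, octOne, Prod.ext_iff]

lemma octMul_add_left (x y z : Oct F) :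
    octMul α β γ (x + y) z = octMul α β γ x z + octMul α β γ y z := by
  obtain ⟨⟨⟨x0,x1⟩,x2,x3⟩,⟨x4,x5⟩,x6,x7⟩ := x
  obtain ⟨⟨⟨y0,y1⟩,y2,y3⟩,⟨y4,y5⟩,y6,y7⟩ := y
  obtain ⟨⟨⟨z0,z1⟩,z2,z3⟩,⟨z4,z5⟩,z6,z7⟩ := z
  simp [octMul, mul2, mul1, conj2, conj1, Prod.ext_iff]
  and_intros <;> ring

lemma octMul_add_right (x y z : Oct F) :
    octMul α β γ x (y + z) = octMul α β γ x y + octMul α β γ x z := by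
  obtain ⟨⟨⟨x0,x1⟩,x2,x3⟩,⟨x4,x5⟩,x6,x7⟩ := x
  obtain ⟨⟨⟨y0,y1⟩,y2,y3⟩,⟨y4,y5⟩,y6,y7⟩ := y
  obtain ⟨⟨⟨z0,z1⟩,z2,z3⟩,⟨z4,z5⟩,z6,z7⟩ := z
  simp [octMul, mul2, mul1, conj2, conj1, Prod.ext_iff]
  and_intros <;> ring

lemma octMul_smul_left (c : F) (x y : Oct F) :
    octMul α β γ (c • x) y = c • octMul α β γ x y := by
  obtain ⟨⟨⟨x0,x1⟩,x2,x3⟩,⟨x4,x5⟩,x6,x7⟩ := x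
  obtain ⟨⟨⟨y0,y1⟩,y2,y3⟩,⟨y4,y5⟩,y6,y7⟩ := y
  simp [octMul, mul2, mul1, conj2, conj1, Prod.ext_iff]
  and_intros <;> ring

lemma octMul_smul_right (c : F) (x y : Oct F) :
    octMul α β γ x (c • y) = c • octMul α β γ x y := by
  obtain ⟨⟨⟨x0,x1⟩,x2,x3⟩,⟨x4,x5⟩,x6,x7⟩ := x
  obtain ⟨⟨⟨y0,y1⟩,y2,y3⟩,⟨y4,y5⟩,y6,y7⟩ := y
  simp [octMul, mul2, mul1, conj2, conj1, Prod.ext_iff]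
  and_intros <;> ring

end Helpers
section ImLemmas
variable {F : Type*} [Field F] (α β γ : F)

lemma octMul_self_im (u : Oct F) (hu : u.1.1.1 = 0) :
    octMul α β γ u u = (octMul α β γ u u).1.1.1 • octOne F := by
  obtain ⟨⟨⟨u0,u1⟩,u2,u3⟩,⟨u4,u5⟩,u6,u7⟩ := u
  simp only [] at hu
  subst hu
  simp only [octMul, mul2, mul1, conj2, conj1, octOne, Prod.fst, Prod.snd,
    Prod.mk_add_mk, Prod.smul_mk, Prod.mk_sub_mk, Prod.neg_mk, smul_eq_mul, Prod.mk.injEq]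
  and_intros <;> ring

lemma octMul_anti_im (u v : Oct F) (hu : u.1.1.1 = 0) (hv : v.1.1.1 = 0) :
    octMul α β γ v u =
      ((octMul α β γ u v).1.1.1 + (octMul α β γ v u).1.1.1) • octOne F
        - octMul α β γ u v := by
  obtain ⟨⟨⟨u0,u1⟩,u2,u3⟩,⟨u4,u5⟩,u6,u7⟩ := u
  obtain ⟨⟨⟨v0,v1⟩,v2,v3⟩,⟨v4,v5⟩,v6,v7⟩ := v
  simp only [] at hu hv
  subst hu hv
  simp only [octMul, mul2, mul1, conj2, conj1, octOne, Prod.fst, Prod.snd,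
    Prod.mk_add_mk, Prod.smul_mk, Prod.mk_sub_mk, Prod.neg_mk, smul_eq_mul, Prod.mk.injEq]
  and_intros <;> ring

lemma octMul_u_uv (u v : Oct F) (hu : u.1.1.1 = 0) (hv : v.1.1.1 = 0) :
    octMul α β γ u (octMul α β γ u v) = (octMul α β γ u u).1.1.1 • v := by
  obtain ⟨⟨⟨u0,u1⟩,u2,u3⟩,⟨u4,u5⟩,u6,u7⟩ := u
  obtain ⟨⟨⟨v0,v1⟩,v2,v3⟩,⟨v4,v5⟩,v6,v7⟩ := v
  simp only [] at hu hv
  subst hu hv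
  simp only [octMul, mul2, mul1, conj2, conj1, octOne, Prod.fst, Prod.snd,
    Prod.mk_add_mk, Prod.smul_mk, Prod.mk_sub_mk, Prod.neg_mk, smul_eq_mul, Prod.mk.injEq]
  and_intros <;> ring

lemma octMul_uv_u (u v : Oct F) (hu : u.1.1.1 = 0) (hv : v.1.1.1 = 0) :
    octMul α β γ (octMul α β γ u v) u =
      ((octMul α β γ u v).1.1.1 + (octMul α β γ v u).1.1.1) • u
        - (octMul α β γ u u).1.1.1 • v := by
  obtain ⟨⟨⟨u0,u1⟩,u2,u3⟩,⟨u4,u5⟩,u6,u7⟩ := u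
  obtain ⟨⟨⟨v0,v1⟩,v2,v3⟩,⟨v4,v5⟩,v6,v7⟩ := v
  simp only [] at hu hv
  subst hu hv
  simp only [octMul, mul2, mul1, conj2, conj1, octOne, Prod.fst, Prod.snd,
    Prod.mk_add_mk, Prod.smul_mk, Prod.mk_sub_mk, Prod.neg_mk, smul_eq_mul, Prod.mk.injEq]
  and_intros <;> ring

lemma octMul_v_uv (u v : Oct F) (hu : u.1.1.1 = 0) (hv : v.1.1.1 = 0) :
    octMul α β γ v (octMul α β γ u v) =
      ((octMul α β γ u v).1.1.1 + (octMul α β γ v u).1.1.1) • v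
        - (octMul α β γ v v).1.1.1 • u := by
  obtain ⟨⟨⟨u0,u1⟩,u2,u3⟩,⟨u4,u5⟩,u6,u7⟩ := u
  obtain ⟨⟨⟨v0,v1⟩,v2,v3⟩,⟨v4,v5⟩,v6,v7⟩ := v
  simp only [] at hu hv
  subst hu hv
  simp only [octMul, mul2, mul1, conj2, conj1, octOne, Prod.fst, Prod.snd,
    Prod.mk_add_mk, Prod.smul_mk, Prod.mk_sub_mk, Prod.neg_mk, smul_eq_mul, Prod.mk.injEq]
  and_intros <;> ring

lemma octMul_uv_v (u v : Oct F) (hu : u.1.1.1 = 0) (hv : v.1.1.1 = 0) :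
    octMul α β γ (octMul α β γ u v) v = (octMul α β γ v v).1.1.1 • u := by
  obtain ⟨⟨⟨u0,u1⟩,u2,u3⟩,⟨u4,u5⟩,u6,u7⟩ := u
  obtain ⟨⟨⟨v0,v1⟩,v2,v3⟩,⟨v4,v5⟩,v6,v7⟩ := v
  simp only [] at hu hv
  subst hu hv
  simp only [octMul, mul2, mul1, conj2, conj1, octOne, Prod.fst, Prod.snd,
    Prod.mk_add_mk, Prod.smul_mk, Prod.mk_sub_mk, Prod.neg_mk, smul_eq_mul, Prod.mk.injEq]
  and_intros <;> ring

lemma octMul_uv_uv (u v : Oct F) (hu : u.1.1.1 = 0) (hv : v.1.1.1 = 0) :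
    octMul α β γ (octMul α β γ u v) (octMul α β γ u v) =
      ((octMul α β γ u v).1.1.1 + (octMul α β γ v u).1.1.1) • octMul α β γ u v
        - ((octMul α β γ u u).1.1.1 * (octMul α β γ v v).1.1.1) • octOne F := by
  obtain ⟨⟨⟨u0,u1⟩,u2,u3⟩,⟨u4,u5⟩,u6,u7⟩ := u
  obtain ⟨⟨⟨v0,v1⟩,v2,v3⟩,⟨v4,v5⟩,v6,v7⟩ := v
  simp only [] at hu hv
  subst hu hv
  simp only [octMul, mul2, mul1, conj2, conj1, octOne, Prod.fst, Prod.snd,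
    Prod.mk_add_mk, Prod.smul_mk, Prod.mk_sub_mk, Prod.neg_mk, smul_eq_mul, Prod.mk.injEq]
  and_intros <;> ring

end ImLemmas
section Closure
variable {F : Type*} [Field F]

lemma octMul_zero_right (α β γ : F) (x : Oct F) : octMul α β γ x 0 = 0 := by
  have h := octMul_smul_right α β γ 0 x 0
  simpa using h

lemma octMul_zero_left (α β γ : F) (x : Oct F) : octMul α β γ 0 x = 0 := by
  have h := octMul_smul_left α β γ 0 0 x
  simpa using h

lemma mul_mem_span (α β γ : F) (s : Set (Oct F))
    (h : ∀ x ∈ s, ∀ y ∈ s, octMul α β γ x y ∈ Submodule.span F s)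
    {x y : Oct F} (hx : x ∈ Submodule.span F s) (hy : y ∈ Submodule.span F s) :
    octMul α β γ x y ∈ Submodule.span F s := by
  have step1 : ∀ x ∈ s, octMul α β γ x y ∈ Submodule.span F s := by
    intro x hxs
    induction hy using Submodule.span_induction with
    | mem y hys => exact h x hxs y hys
    | zero => rw [octMul_zero_right]; exact zero_mem _
    | add a b _ _ ha hb => rw [octMul_add_right]; exact add_mem ha hb
    | smul c a _ ha => rw [octMul_smul_right]; exact Submodule.smul_mem _ _ ha
  induction hx using Submodule.span_induction with
  | mem x hxs => exact step1 x hxs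
  | zero => rw [octMul_zero_left]; exact zero_mem _
  | add a b _ _ ha hb => rw [octMul_add_left]; exact add_mem ha hb
  | smul c a _ ha => rw [octMul_smul_left]; exact Submodule.smul_mem _ _ ha

lemma range_three (a b c : Oct F) : Set.range ![a, b, c] = {a, b, c} := by
  ext z
  simp [Fin.exists_fin_succ, Fin.exists_fin_two]
  tauto

lemma range_four (a b c d : Oct F) : Set.range ![a, b, c, d] = {a, b, c, d} := by
  ext z
  simp [Fin.exists_fin_succ, Fin.exists_fin_two]
  tauto

end Closure
/-- The subalgebra generated by two linearly independent imaginary elements `u, v` is the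
linear span of `1, u, v, u·v`; in particular it has dimension 3 or 4. -/
theorem adjoin_pair_eq_span (F : Type*) [Field F] (h2 : (2 : F) ≠ 0)
    (α β γ : F) (hα : α ≠ 0) (hβ : β ≠ 0) (hγ : γ ≠ 0)
    (u v : Oct F) (hu : u ∈ octIm F) (hv : v ∈ octIm F)
    (huv : LinearIndependent F ![u, v]) :
    adjoin α β γ {u, v} =
      Submodule.span F {octOne F, u, v, octMul α β γ u v} ∧
    (Module.finrank F ↥(adjoin α β γ {u, v}) = 3 ∨
      Module.finrank F ↥(adjoin α β γ {u, v}) = 4) := by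
  have hcu : octConj u = -u := hu
  have hcv : octConj v = -v := hv
  have firstzero : ∀ z : Oct F, octConj z = -z → z.1.1.1 = 0 := by
    intro z hz
    have h1 := congrArg (fun x : Oct F => x.1.1.1) hz
    simp only [octConj, conj2, conj1, Prod.fst_neg] at h1
    have h2' : 2 * z.1.1.1 = 0 := by linear_combination h1
    rcases mul_eq_zero.1 h2' with h | h
    · exact absurd h h2
    · exact h
  have hu0 : u.1.1.1 = 0 := firstzero u hcu
  have hv0 : v.1.1.1 = 0 := firstzero v hcv
  set w : Oct F := octMul α β γ u v with hw
  set S : Submodule F (Oct F) := Submodule.span F {octOne F, u, v, w} with hSdef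
  have h1S : octOne F ∈ S := Submodule.subset_span (by simp)
  have huS : u ∈ S := Submodule.subset_span (by simp)
  have hvS : v ∈ S := Submodule.subset_span (by simp)
  have hwS : w ∈ S := Submodule.subset_span (by simp)
  have hgen : ∀ x ∈ ({octOne F, u, v, w} : Set (Oct F)),
      ∀ y ∈ ({octOne F, u, v, w} : Set (Oct F)), octMul α β γ x y ∈ S := by
    intro x hx y hy
    simp only [Set.mem_insert_iff, Set.mem_singleton_iff] at hx hy
    rcases hx with hx | hx | hx | hx <;> rcases hy with hy | hy | hy | hy <;> rw [hx, hy]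
    · rw [octMul_one_left]; exact h1S
    · rw [octMul_one_left]; exact huS
    · rw [octMul_one_left]; exact hvS
    · rw [octMul_one_left]; exact hwS
    · rw [octMul_one_right]; exact huS
    · rw [octMul_self_im α β γ u hu0]; exact Submodule.smul_mem _ _ h1S
    · exact hwS
    · rw [octMul_u_uv α β γ u v hu0 hv0]; exact Submodule.smul_mem _ _ hvS
    · rw [octMul_one_right]; exact hvS
    · rw [octMul_anti_im α β γ u v hu0 hv0]
      exact sub_mem (Submodule.smul_mem _ _ h1S) hwS
    · rw [octMul_self_im α β γ v hv0]; exact Submodule.smul_mem _ _ h1S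
    · rw [octMul_v_uv α β γ u v hu0 hv0]
      exact sub_mem (Submodule.smul_mem _ _ hvS) (Submodule.smul_mem _ _ huS)
    · rw [octMul_one_right]; exact hwS
    · rw [octMul_uv_u α β γ u v hu0 hv0]
      exact sub_mem (Submodule.smul_mem _ _ huS) (Submodule.smul_mem _ _ hvS)
    · rw [octMul_uv_v α β γ u v hu0 hv0]; exact Submodule.smul_mem _ _ huS
    · rw [octMul_uv_uv α β γ u v hu0 hv0]
      exact sub_mem (Submodule.smul_mem _ _ hwS) (Submodule.smul_mem _ _ h1S)
  have hSub : IsSubalg α β γ S :=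
    ⟨h1S, fun x hx y hy => mul_mem_span α β γ _ hgen hx hy⟩
  have hAdj : adjoin α β γ {u, v} = S := by
    apply le_antisymm
    · exact sInf_le ⟨hSub, by
        intro z hz
        rcases hz with rfl | hz
        · exact huS
        · rcases hz with rfl; exact hvS⟩
    · apply le_sInf
      rintro H ⟨⟨hH1, hHmul⟩, hHsub⟩
      apply Submodule.span_le.2
      intro z hz
      simp only [Set.mem_insert_iff, Set.mem_singleton_iff] at hz
      have huH : u ∈ H := hHsub (by simp)
      have hvH : v ∈ H := hHsub (by simp)
      rcases hz with rfl | rfl | rfl | rfl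
      · exact hH1
      · exact huH
      · exact hvH
      · exact hHmul u huH v hvH
  refine ⟨hAdj, ?_⟩
  rw [hAdj]
  -- linear independence of 1, u, v
  have hImSpan : Submodule.span F ({u, v} : Set (Oct F)) ≤ octIm F := by
    apply Submodule.span_le.2
    rintro z (rfl | hz)
    · exact hu
    · rcases hz with rfl; exact hv
  have h1notIm : octOne F ∉ octIm F := by
    intro h
    have h' : octConj (octOne F) = -(octOne F) := h
    have h1 := congrArg (fun x : Oct F => x.1.1.1) h'
    simp only [octConj, conj2, conj1, octOne, Prod.fst_neg] at h1
    exact h2 (by linear_combination h1)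
  have hrange2 : Set.range ![u, v] = ({u, v} : Set (Oct F)) := by
    ext z; simp [Fin.exists_fin_two]; tauto
  have hind3 : LinearIndependent F ![octOne F, u, v] := by
    apply linearIndependent_fin_cons.2
    refine ⟨huv, ?_⟩
    rw [hrange2]
    intro hmem
    exact h1notIm (hImSpan hmem)
  have hrange3 : Set.range ![octOne F, u, v] = ({octOne F, u, v} : Set (Oct F)) :=
    range_three _ _ _
  by_cases hw4 : w ∈ Submodule.span F ({octOne F, u, v} : Set (Oct F))
  · left
    have hS3 : S = Submodule.span F ({octOne F, u, v} : Set (Oct F)) := by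
      apply le_antisymm
      · apply Submodule.span_le.2
        intro z hz
        simp only [Set.mem_insert_iff, Set.mem_singleton_iff] at hz
        rcases hz with rfl | rfl | rfl | rfl
        · exact Submodule.subset_span (by simp)
        · exact Submodule.subset_span (by simp)
        · exact Submodule.subset_span (by simp)
        · exact hw4
      · apply Submodule.span_mono
        intro z hz
        simp only [Set.mem_insert_iff, Set.mem_singleton_iff] at hz ⊢
        tauto
    rw [hS3, ← hrange3, finrank_span_eq_card hind3]
    simp
  · right
    have hind4 : LinearIndependent F ![w, octOne F, u, v] := by
      apply linearIndependent_fin_cons.2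
      refine ⟨hind3, ?_⟩
      rw [hrange3]
      exact hw4
    have hset : ({octOne F, u, v, w} : Set (Oct F)) = Set.range ![w, octOne F, u, v] := by
      rw [range_four]
      ext z
      simp only [Set.mem_insert_iff, Set.mem_singleton_iff]
      tauto
    rw [hSdef, hset, finrank_span_eq_card hind4]
    simp
end CayleyQFano
end

section
/- Let F be a field with char F ≠ 2, let α, β, γ ∈ F be nonzero, and suppose the Cayley algebra 𝒪 = 𝒪_F(α,β,γ) has no zero divisors. Let B be a 4-dimensional subalgebra of 𝒪 that is closed under the involution (x ∈ B implies x* ∈ B). Then there exist a nonzero γ' ∈ F and an element i ∈ Im(𝒪) with i ∉ B such that i·i = γ'·1, 𝒪 = B ⊕ i·B as F-vector spaces (where i·B = {i·b : b ∈ B}), and for all p, q ∈ B: p·(i·q) = i·(p*·q), (p·i)·q = (p·q*)·i, and (i·p)·(q·i) = γ'·(p·q)*. -/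
open Module Submodule

namespace CayleyQFano

variable (F : Type*) [Field F]

variable {F}

/-! ### Auxiliary material -/

section Aux

variable (F)

/-- The (polar) bilinear form of the norm. -/
def bf (α β γ : F) (x y : Oct F) : F :=
  2 * (x.1.1.1*y.1.1.1 - α*(x.1.1.2*y.1.1.2) - β*(x.1.2.1*y.1.2.1) + α*β*(x.1.2.2*y.1.2.2)
   - γ*(x.2.1.1*y.2.1.1) + γ*α*(x.2.1.2*y.2.1.2) + γ*β*(x.2.2.1*y.2.2.1) - γ*α*β*(x.2.2.2*y.2.2.2))

/-- The norm form. -/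
def nf (α β γ : F) (x : Oct F) : F :=
  x.1.1.1^2 - α*x.1.1.2^2 - β*x.1.2.1^2 + α*β*x.1.2.2^2
   - γ*x.2.1.1^2 + γ*α*x.2.1.2^2 + γ*β*x.2.2.1^2 - γ*α*β*x.2.2.2^2

variable {F}

lemma octConj_def (x : Oct F) : octConj x =
    (((x.1.1.1, -x.1.1.2), (-x.1.2.1, -x.1.2.2)), ((-x.2.1.1, -x.2.1.2), (-x.2.2.1, -x.2.2.2))) := by
  simp [octConj, conj2, conj1, Prod.ext_iff]

lemma octMul_def (α β γ : F) (x y : Oct F) : octMul α β γ x y =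
  (((x.1.1.1*y.1.1.1 + γ*x.2.1.1*y.2.1.1 + β*x.1.2.1*y.1.2.1 - β*γ*x.2.2.1*y.2.2.1 + α*x.1.1.2*y.1.1.2 - α*γ*x.2.1.2*y.2.1.2 - α*β*x.1.2.2*y.1.2.2 + α*β*γ*x.2.2.2*y.2.2.2,
     x.1.1.2*y.1.1.1 + x.1.1.1*y.1.1.2 - γ*x.2.1.2*y.2.1.1 + γ*x.2.1.1*y.2.1.2 - β*x.1.2.2*y.1.2.1 + β*x.1.2.1*y.1.2.2 - β*γ*x.2.2.2*y.2.2.1 + β*γ*x.2.2.1*y.2.2.2),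
    (x.1.2.1*y.1.1.1 + x.1.1.1*y.1.2.1 - γ*x.2.2.1*y.2.1.1 + γ*x.2.1.1*y.2.2.1 + α*x.1.2.2*y.1.1.2 - α*x.1.1.2*y.1.2.2 + α*γ*x.2.2.2*y.2.1.2 - α*γ*x.2.1.2*y.2.2.2,
     x.1.2.2*y.1.1.1 + x.1.2.1*y.1.1.2 - x.1.1.2*y.1.2.1 + x.1.1.1*y.1.2.2 - γ*x.2.2.2*y.2.1.1 + γ*x.2.2.1*y.2.1.2 - γ*x.2.1.2*y.2.2.1 + γ*x.2.1.1*y.2.2.2)),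
   ((x.2.1.1*y.1.1.1 + x.1.1.1*y.2.1.1 + β*x.2.2.1*y.1.2.1 - β*x.1.2.1*y.2.2.1 + α*x.2.1.2*y.1.1.2 - α*x.1.1.2*y.2.1.2 - α*β*x.2.2.2*y.1.2.2 + α*β*x.1.2.2*y.2.2.2,
     x.2.1.2*y.1.1.1 + x.2.1.1*y.1.1.2 - x.1.1.2*y.2.1.1 + x.1.1.1*y.2.1.2 + β*x.2.2.2*y.1.2.1 - β*x.2.2.1*y.1.2.2 + β*x.1.2.2*y.2.2.1 - β*x.1.2.1*y.2.2.2),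
    (x.2.2.1*y.1.1.1 + x.2.1.1*y.1.2.1 - x.1.2.1*y.2.1.1 + x.1.1.1*y.2.2.1 - α*x.2.2.2*y.1.1.2 + α*x.2.1.2*y.1.2.2 - α*x.1.2.2*y.2.1.2 + α*x.1.1.2*y.2.2.2,
     x.2.2.2*y.1.1.1 - x.2.2.1*y.1.1.2 + x.2.1.2*y.1.2.1 + x.2.1.1*y.1.2.2 - x.1.2.2*y.2.1.1 - x.1.2.1*y.2.1.2 + x.1.1.2*y.2.2.1 + x.1.1.1*y.2.2.2))) := by
  simp only [octMul, mul2, mul1, conj2, conj1, Prod.mk_add_mk, Prod.smul_mk, smul_eq_mul, Prod.fst_neg, Prod.snd_neg,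
    Prod.mk.injEq]
  refine ⟨⟨⟨?_, ?_⟩, ?_, ?_⟩, ⟨?_, ?_⟩, ?_, ?_⟩ <;> ring

lemma bf_symm (α β γ : F) (x y : Oct F) : bf F α β γ x y = bf F α β γ y x := by
  simp only [bf]; ring

lemma bf_self (α β γ : F) (x : Oct F) : bf F α β γ x x = 2 * nf F α β γ x := by
  simp only [bf, nf]; ring

lemma bf_sub_left (α β γ : F) (x y z : Oct F) :
    bf F α β γ (x - y) z = bf F α β γ x z - bf F α β γ y z := by
  simp only [bf, Prod.fst_sub, Prod.snd_sub]; ring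

lemma bf_neg_right (α β γ : F) (x y : Oct F) : bf F α β γ x (-y) = -bf F α β γ x y := by
  simp only [bf, Prod.fst_neg, Prod.snd_neg]; ring

lemma bf_smul_left (α β γ : F) (c : F) (x y : Oct F) :
    bf F α β γ (c • x) y = c * bf F α β γ x y := by
  simp only [bf, Prod.smul_fst, Prod.smul_snd, smul_eq_mul]; ring

/-- The polar form as a bilinear form. -/
def Bform (α β γ : F) : LinearMap.BilinForm F (Oct F) :=
  LinearMap.mk₂ F (bf F α β γ)
    (fun x x' y => by simp only [bf, Prod.fst_add, Prod.snd_add]; ring)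
    (fun c x y => by simp only [bf, Prod.smul_fst, Prod.smul_snd, smul_eq_mul]; ring)
    (fun x y y' => by simp only [bf, Prod.fst_add, Prod.snd_add]; ring)
    (fun c x y => by simp only [bf, Prod.smul_fst, Prod.smul_snd, smul_eq_mul]; ring)

@[simp] lemma Bform_apply (α β γ : F) (x y : Oct F) : Bform α β γ x y = bf F α β γ x y := rfl

theorem idA (α β γ : F) (x y z : Oct F) :
    bf F α β γ (octMul α β γ x y) z = bf F α β γ y (octMul α β γ (octConj x) z) := by
  simp only [octMul_def, octConj_def, bf]; ring

theorem idB (α β γ : F) (x y z : Oct F) :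
    bf F α β γ (octMul α β γ x y) z = bf F α β γ x (octMul α β γ z (octConj y)) := by
  simp only [octMul_def, octConj_def, bf]; ring

set_option maxHeartbeats 2000000 in
theorem idC1 (α β γ : F) (x y u v : Oct F) :
    bf F α β γ (octMul α β γ x y) (octMul α β γ u v)
      + bf F α β γ (octMul α β γ u y) (octMul α β γ x v)
      = bf F α β γ x u * bf F α β γ y v := by
  simp only [octMul_def, bf]; ring

set_option maxHeartbeats 2000000 in
theorem idC2 (α β γ : F) (x y u v : Oct F) :
    bf F α β γ (octMul α β γ x y) (octMul α β γ u v)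
      + bf F α β γ (octMul α β γ x v) (octMul α β γ u y)
      = bf F α β γ x u * bf F α β γ y v := by
  simp only [octMul_def, bf]; ring

theorem normid (α β γ : F) (x : Oct F) :
    octMul α β γ x (octConj x) = nf F α β γ x • octOne F := by
  simp only [octMul_def, octConj_def, nf, octOne, Prod.smul_mk, smul_eq_mul, Prod.mk.injEq]
  refine ⟨⟨⟨?_, ?_⟩, ?_, ?_⟩, ⟨?_, ?_⟩, ?_, ?_⟩ <;> ring

theorem rightalt (α β γ : F) (x y : Oct F) :
    octMul α β γ (octMul α β γ x y) y = octMul α β γ x (octMul α β γ y y) := by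
  simp only [octMul_def, Prod.mk.injEq]
  refine ⟨⟨⟨?_, ?_⟩, ?_, ?_⟩, ⟨?_, ?_⟩, ?_, ?_⟩ <;> ring

theorem conjanti (α β γ : F) (x y : Oct F) :
    octConj (octMul α β γ x y) = octMul α β γ (octConj y) (octConj x) := by
  simp only [octMul_def, octConj_def, Prod.mk.injEq]
  refine ⟨⟨⟨?_, ?_⟩, ?_, ?_⟩, ⟨?_, ?_⟩, ?_, ?_⟩ <;> ring

lemma conj_conj (x : Oct F) : octConj (octConj x) = x := by
  simp [octConj_def, Prod.ext_iff]

lemma conj_eq_zero {x : Oct F} (h : octConj x = 0) : x = 0 := by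
  have := congrArg octConj h
  rw [conj_conj] at this
  simpa [octConj_def, Prod.ext_iff] using this

lemma octMul_neg_left (α β γ : F) (x y : Oct F) :
    octMul α β γ (-x) y = -octMul α β γ x y := by
  simp only [octMul_def, Prod.fst_neg, Prod.snd_neg, Prod.neg_mk, Prod.mk.injEq]
  refine ⟨⟨⟨?_, ?_⟩, ?_, ?_⟩, ⟨?_, ?_⟩, ?_, ?_⟩ <;> ring

lemma octMul_neg_right (α β γ : F) (x y : Oct F) :
    octMul α β γ x (-y) = -octMul α β γ x y := by
  simp only [octMul_def, Prod.fst_neg, Prod.snd_neg, Prod.neg_mk, Prod.mk.injEq]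
  refine ⟨⟨⟨?_, ?_⟩, ?_, ?_⟩, ⟨?_, ?_⟩, ?_, ?_⟩ <;> ring

lemma octMul_smul_one (α β γ : F) (c : F) (x : Oct F) :
    octMul α β γ x (c • octOne F) = c • x := by
  simp only [octMul_def, octOne, Prod.smul_mk, smul_eq_mul, Prod.ext_iff]
  simp [Prod.smul_fst, Prod.smul_snd, smul_eq_mul]
  refine ⟨⟨⟨?_, ?_⟩, ?_, ?_⟩, ⟨?_, ?_⟩, ?_, ?_⟩ <;> ring

/-- Left multiplication by a fixed element, as a linear map. -/
def lmul (α β γ : F) (i : Oct F) : Oct F →ₗ[F] Oct F where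
  toFun := octMul α β γ i
  map_add' x y := by
    simp only [octMul_def, Prod.fst_add, Prod.snd_add, Prod.mk_add_mk, Prod.mk.injEq]
    refine ⟨⟨⟨?_, ?_⟩, ?_, ?_⟩, ⟨?_, ?_⟩, ?_, ?_⟩ <;> ring
  map_smul' c x := by
    simp only [octMul_def, Prod.smul_fst, Prod.smul_snd, smul_eq_mul, Prod.smul_mk,
      RingHom.id_apply, Prod.mk.injEq]
    refine ⟨⟨⟨?_, ?_⟩, ?_, ?_⟩, ⟨?_, ?_⟩, ?_, ?_⟩ <;> ring

@[simp] lemma lmul_apply (α β γ : F) (i x : Oct F) : lmul α β γ i x = octMul α β γ i x := rfl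

end Aux
set_option maxHeartbeats 1600000

/-- A Cayley division algebra is the Cayley–Dickson double of any of its star-closed
4-dimensional subalgebras `B`: there is an imaginary element `i ∉ B` with `i·i = δ·1 ≠ 0`
such that `𝒪 = B ⊕ i·B` and the doubling relations hold. -/
theorem division_doubling (F : Type*) [Field F] (h2 : (2 : F) ≠ 0)
    (α β γ : F) (hα : α ≠ 0) (hβ : β ≠ 0) (hγ : γ ≠ 0)
    (hdiv : HasNoZeroDiv α β γ)
    (B : Submodule F (Oct F)) (hB : IsSubalg α β γ B) (hB4 : Module.finrank F ↥B = 4)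
    (hBstar : ∀ x ∈ B, octConj x ∈ B) :
    ∃ δ : F, δ ≠ 0 ∧ ∃ i ∈ octIm F, i ∉ B ∧
      octMul α β γ i i = δ • octOne F ∧
      (∀ x : Oct F, ∃ b ∈ B, ∃ c ∈ B, x = b + octMul α β γ i c) ∧
      (∀ b ∈ B, ∀ c ∈ B, b + octMul α β γ i c = 0 → b = 0 ∧ c = 0) ∧
      (∀ p ∈ B, ∀ q ∈ B,
        octMul α β γ p (octMul α β γ i q) = octMul α β γ i (octMul α β γ (octConj p) q) ∧
        octMul α β γ (octMul α β γ p i) q = octMul α β γ (octMul α β γ p (octConj q)) i ∧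
        octMul α β γ (octMul α β γ i p) (octMul α β γ q i) =
          δ • octConj (octMul α β γ p q)) := by
  classical
  have hrefl : (Bform (F := F) α β γ).IsRefl := by
    intro x y h
    simp only [Bform_apply] at *
    rw [bf_symm]; exact h
  -- anisotropy of the norm form
  have aniso : ∀ x : Oct F, nf F α β γ x = 0 → x = 0 := by
    intro x hx
    have h := normid α β γ x
    rw [hx, zero_smul] at h
    rcases hdiv x (octConj x) h with h' | h'
    · exact h'
    · exact conj_eq_zero h'
  have bfself_zero : ∀ x : Oct F, bf F α β γ x x = 0 → x = 0 := by
    intro x hx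
    rw [bf_self] at hx
    rcases mul_eq_zero.mp hx with h' | h'
    · exact absurd h' h2
    · exact aniso x h'
  -- equality test via the nondegenerate form
  have eq_of_bf : ∀ L R : Oct F, (∀ z, bf F α β γ L z = bf F α β γ R z) → L = R := by
    intro L R h
    have hz : bf F α β γ (L - R) (L - R) = 0 := by
      rw [bf_sub_left, h (L - R), sub_self]
    have := bfself_zero _ hz
    exact sub_eq_zero.mp this
  have hfin : FiniteDimensional F (Oct F) := inferInstance
  have hOct8 : finrank F (Oct F) = 8 := by
    simp [Module.finrank_prod, Module.finrank_self]
  -- the radical is trivial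
  have hrad : B ⊓ (Bform (F := F) α β γ).orthogonal ⊤ = ⊥ := by
    rw [eq_bot_iff]
    intro x hx
    have hx2 := hx.2 x Submodule.mem_top
    simp only [LinearMap.BilinForm.IsOrtho, Bform_apply] at hx2
    simpa using bfself_zero x hx2
  have hcount := LinearMap.BilinForm.finrank_add_finrank_orthogonal
      (B := Bform (F := F) α β γ) hrefl B
  rw [hrad, hB4, hOct8] at hcount
  have horthrank : finrank F ((Bform (F := F) α β γ).orthogonal B) = 4 := by
    simp only [finrank_bot] at hcount
    omega
  -- choose a nonzero orthogonal element i
  have hne : (Bform (F := F) α β γ).orthogonal B ≠ ⊥ := by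
    intro h
    rw [h, finrank_bot] at horthrank
    omega
  obtain ⟨i, hiO, hi0⟩ := Submodule.exists_mem_ne_zero_of_ne_bot hne
  have hwi : ∀ w ∈ B, bf F α β γ w i = 0 := by
    intro w hw
    exact hiO w hw
  have hiw : ∀ w ∈ B, bf F α β γ i w = 0 := by
    intro w hw
    rw [bf_symm]; exact hwi w hw
  -- i is imaginary
  have hi1 : bf F α β γ i (octOne F) = 0 := hiw _ hB.1
  have hi111 : i.1.1.1 = 0 := by
    simp only [bf, octOne] at hi1
    rcases mul_eq_zero.mp hi1 with h' | h'
    · exact absurd h' h2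
    · linear_combination h'
  have hconj_i : octConj i = -i := by
    rw [octConj_def]
    rw [Prod.ext_iff, Prod.ext_iff, Prod.ext_iff, Prod.ext_iff, Prod.ext_iff, Prod.ext_iff,
      Prod.ext_iff]
    simp [hi111]
  -- i² = δ • 1 with δ = -nf i ≠ 0
  have hnfi : nf F α β γ i ≠ 0 := fun h => hi0 (aniso i h)
  refine ⟨-nf F α β γ i, neg_ne_zero.mpr hnfi, i, ?_, ?_, ?_, ?_, ?_, ?_⟩
  · exact hconj_i
  · -- i ∉ B
    intro hiB
    exact hi0 (bfself_zero i (hwi i hiB))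
  · -- i·i = δ•1
    have h := normid α β γ i
    rw [hconj_i, octMul_neg_right] at h
    have h' := congrArg (fun t => -t) h
    simp only [neg_neg] at h'
    rw [neg_smul]
    exact h'
  · -- decomposition: every x = b + i·c
    set iB : Submodule F (Oct F) := Submodule.map (lmul α β γ i) B with hiBdef
    have hiB_perp : ∀ x ∈ iB, ∀ w ∈ B, bf F α β γ x w = 0 := by
      rintro x ⟨c, hc, rfl⟩ w hw
      rw [lmul_apply, idB]
      exact hiw _ (hB.2 w hw _ (hBstar c hc))
    have hinf : B ⊓ iB = ⊥ := by
      rw [eq_bot_iff]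
      intro x hx
      have := hiB_perp x hx.2 x hx.1
      simpa using bfself_zero x this
    have hinj : Function.Injective (lmul α β γ i) := by
      rw [← LinearMap.ker_eq_bot, eq_bot_iff]
      intro c hc
      simp only [LinearMap.mem_ker, lmul_apply] at hc
      rcases hdiv i c hc with h' | h'
      · exact absurd h' hi0
      · simpa using h'
    have hiBrank : finrank F iB = 4 := by
      rw [hiBdef, ← hB4]
      exact (Submodule.equivMapOfInjective _ hinj B).symm.finrank_eq
    have hsup : B ⊔ iB = ⊤ := by
      apply Submodule.eq_top_of_finrank_eq
      have hle := Submodule.finrank_sup_add_finrank_inf_eq B iB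
      rw [hinf, finrank_bot, hB4, hiBrank] at hle
      rw [hOct8]
      omega
    intro x
    have hx : x ∈ B ⊔ iB := by rw [hsup]; exact Submodule.mem_top
    obtain ⟨b, hb, z, hz, rfl⟩ := Submodule.mem_sup.mp hx
    obtain ⟨c, hc, rfl⟩ := hz
    exact ⟨b, hb, c, hc, rfl⟩
  · -- uniqueness
    intro b hb c hc h
    have hb0 : b = 0 := by
      have hbm : b = octMul α β γ i (-c) := by
        rw [octMul_neg_right]
        exact eq_neg_of_add_eq_zero_left h
      have hperp : bf F α β γ b b = 0 := by
        nth_rewrite 1 [hbm]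
        rw [idB]
        exact hiw _ (hB.2 b hb _ (hBstar _ (B.neg_mem hc)))
      exact bfself_zero b hperp
    refine ⟨hb0, ?_⟩
    rw [hb0, zero_add] at h
    rcases hdiv i c h with h' | h'
    · exact absurd h' hi0
    · exact h'
  · -- the three doubling relations
    intro p hp q hq
    have hippq : bf F α β γ i (octMul α β γ p q) = 0 := hiw _ (hB.2 p hp q hq)
    have hipbar : bf F α β γ i (octConj p) = 0 := hiw _ (hBstar p hp)
    have hiqbar : bf F α β γ i (octConj q) = 0 := hiw _ (hBstar q hq)
    refine ⟨?_, ?_, ?_⟩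
    · -- p(iq) = i(p̄q)
      apply eq_of_bf
      intro z
      have e1 := idA α β γ p (octMul α β γ i q) z
      have e2 := idC1 α β γ i q (octConj p) z
      have e3 := idA α β γ i (octMul α β γ (octConj p) q) z
      rw [hconj_i, octMul_neg_left, bf_neg_right] at e3
      rw [hipbar] at e2
      rw [e1, e3]
      linear_combination e2
    · -- (pi)q = (pq̄)i
      apply eq_of_bf
      intro z
      have e1 := idB α β γ (octMul α β γ p i) q z
      have e2 := idC2 α β γ p i z (octConj q)
      have e3 := idB α β γ (octMul α β γ p (octConj q)) i z
      rw [hconj_i, octMul_neg_right, bf_neg_right] at e3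
      have hiq' : bf F α β γ i (octConj q) = 0 := hiqbar
      rw [e1, e3]
      rw [hiq', mul_zero] at e2
      linear_combination e2
    · -- (ip)(qi) = δ • conj(pq)
      apply eq_of_bf
      intro z
      have e1 := idA α β γ (octMul α β γ i p) (octMul α β γ q i) z
      rw [conjanti, hconj_i, octMul_neg_right, octMul_neg_left, bf_neg_right] at e1
      have e2 := idC1 α β γ q i (octMul α β γ (octConj p) i) z
      have e4 : bf F α β γ q (octMul α β γ (octConj p) i) = 0 := by
        rw [bf_symm, idA, conj_conj]
        exact hippq
      rw [e4, zero_mul] at e2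
      have e5 : octMul α β γ (octMul α β γ (octConj p) i) i
          = octMul α β γ (octConj p) (octMul α β γ i i) := rightalt α β γ _ _
      have hii : octMul α β γ i i = (-nf F α β γ i) • octOne F := by
        have h := normid α β γ i
        rw [hconj_i, octMul_neg_right] at h
        have h' := congrArg (fun t => -t) h
        simp only [neg_neg] at h'
        rw [neg_smul]
        exact h'
      have e6 : octMul α β γ (octMul α β γ (octConj p) i) i
          = (-nf F α β γ i) • octConj p := by
        rw [e5, hii, octMul_smul_one]
      have e7 : bf F α β γ ((-nf F α β γ i) • octConj p) (octMul α β γ q z)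
          = (-nf F α β γ i) * bf F α β γ (octConj p) (octMul α β γ q z) :=
        bf_smul_left α β γ _ _ _
      have e8 : bf F α β γ ((-nf F α β γ i) • octConj (octMul α β γ p q)) z
          = (-nf F α β γ i) * bf F α β γ (octConj p) (octMul α β γ q z) := by
        rw [bf_smul_left, conjanti, idA, conj_conj]
      rw [e1, e8]
      rw [e6, e7] at e2
      linear_combination -e2
end CayleyQFano
end

section
/- Let F be a field with char F ≠ 2, let α, β, γ ∈ F be nonzero, and let 𝒪 = 𝒪_F(α,β,γ). Then 𝒪 contains a zero divisor if and only if there exists a nonzero x ∈ 𝒪 with x*·x = 0. -/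
open Module Submodule

namespace CayleyQFano

variable (F : Type*) [Field F]

variable {F}

/-- The norm form of the Cayley algebra. -/
def onorm (α β γ : F) (x : Oct F) : F :=
  (x.1.1.1^2 - α*x.1.1.2^2 - β*(x.1.2.1^2 - α*x.1.2.2^2))
    - γ*(x.2.1.1^2 - α*x.2.1.2^2 - β*(x.2.2.1^2 - α*x.2.2.2^2))

lemma conjMul_eq_norm (α β γ : F) (x : Oct F) :
    octMul α β γ (octConj x) x = onorm α β γ x • octOne F := by
  obtain ⟨⟨⟨a1, a2⟩, ⟨a3, a4⟩⟩, ⟨⟨a5, a6⟩, ⟨a7, a8⟩⟩⟩ := x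
  simp only [octMul, octConj, mul2, mul1, conj2, conj1, octOne, onorm, Prod.ext_iff,
    Prod.mk_add_mk, Prod.smul_mk, Prod.neg_mk, smul_eq_mul, Prod.fst_add, Prod.snd_add,
    Prod.fst, Prod.snd, neg_neg]
  refine ⟨⟨⟨by ring, by ring⟩, by ring, by ring⟩, ⟨by ring, by ring⟩, by ring, by ring⟩

lemma norm_mul (α β γ : F) (x y : Oct F) :
    onorm α β γ (octMul α β γ x y) = onorm α β γ x * onorm α β γ y := by
  obtain ⟨⟨⟨a1, a2⟩, ⟨a3, a4⟩⟩, ⟨⟨a5, a6⟩, ⟨a7, a8⟩⟩⟩ := x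
  obtain ⟨⟨⟨b1, b2⟩, ⟨b3, b4⟩⟩, ⟨⟨b5, b6⟩, ⟨b7, b8⟩⟩⟩ := y
  simp only [octMul, mul2, mul1, conj2, conj1, onorm, Prod.mk_add_mk, Prod.smul_mk,
    Prod.neg_mk, smul_eq_mul, Prod.fst, Prod.snd, neg_neg]
  ring

lemma norm_zero (α β γ : F) : onorm α β γ (0 : Oct F) = 0 := by
  simp [onorm]

lemma octConj_eq_zero {x : Oct F} : octConj x = 0 ↔ x = 0 := by
  obtain ⟨⟨⟨a1, a2⟩, ⟨a3, a4⟩⟩, ⟨⟨a5, a6⟩, ⟨a7, a8⟩⟩⟩ := x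
  simp [octConj, conj2, conj1, Prod.ext_iff, neg_eq_zero, and_assoc]

lemma octOne_ne_zero : (octOne F) ≠ 0 := by
  simp [octOne, Prod.ext_iff]

lemma norm_isotropic_of_zero (α β γ : F) {x : Oct F} (hx : x ≠ 0)
    (h : onorm α β γ x = 0) :
    ∃ x : Oct F, x ≠ 0 ∧ octMul α β γ (octConj x) x = 0 :=
  ⟨x, hx, by rw [conjMul_eq_norm, h, zero_smul]⟩

/-- A Cayley algebra contains a zero divisor iff the norm form is isotropic: iff there is a
nonzero `x` with `x*·x = 0`. -/
theorem zeroDivisor_iff_norm_isotropic (F : Type*) [Field F] (h2 : (2 : F) ≠ 0)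
    (α β γ : F) (hα : α ≠ 0) (hβ : β ≠ 0) (hγ : γ ≠ 0) :
    (∃ x : Oct F, x ≠ 0 ∧ ∃ y : Oct F, y ≠ 0 ∧
        (octMul α β γ x y = 0 ∨ octMul α β γ y x = 0)) ↔
    (∃ x : Oct F, x ≠ 0 ∧ octMul α β γ (octConj x) x = 0) := by
  constructor
  · rintro ⟨x, hx, y, hy, h | h⟩ <;>
    · have hn : onorm α β γ x * onorm α β γ y = 0 ∨
          onorm α β γ y * onorm α β γ x = 0 := by
        rcases h with h
        first
          | exact Or.inl (by rw [← norm_mul, h, norm_zero])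
          | exact Or.inr (by rw [← norm_mul, h, norm_zero])
      rcases hn with hn | hn <;> rcases mul_eq_zero.mp hn with hn | hn
      · exact norm_isotropic_of_zero α β γ hx hn
      · exact norm_isotropic_of_zero α β γ hy hn
      · exact norm_isotropic_of_zero α β γ hy hn
      · exact norm_isotropic_of_zero α β γ hx hn
  · rintro ⟨x, hx, h⟩
    exact ⟨x, hx, octConj x, fun hc => hx (octConj_eq_zero.mp hc), Or.inr h⟩
end CayleyQFano
end
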